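/- arXiv:2603.21516 — 6 statements merged into one kernel-verified Lean document; each statement's English description precedes it below -/
import Mathlib

section
/- Let f : ℝ^d → ℝ be twice continuously differentiable and satisfy the local PL condition at a local minimizer x*, and let L be the largest eigenvalue of the Hessian ∇²f(x*). Fix β ∈ (0,1) and α ∈ (0, (1+β)/(Lβ)). Then there exist an open neighborhood U of x* and constants c₁, c₂ > 0 such that for all x ∈ U and all v ∈ ℝ^d, c₁ (‖∇f(x)‖² + ‖v‖²) ≤ 𝓛(x, v) ≤ c₂ (‖∇f(x)‖² + ‖v‖²). -/
open RealInnerProductSpace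

/-- `f` satisfies the local Polyak–Łojasiewicz condition at the local minimizer `xs`. -/
def LocalPL {d : ℕ} (f : EuclideanSpace ℝ (Fin d) → ℝ) (xs : EuclideanSpace ℝ (Fin d)) : Prop :=
  ∃ U : Set (EuclideanSpace ℝ (Fin d)), IsOpen U ∧ xs ∈ U ∧
    ∃ ν : ℝ, 0 < ν ∧ ∀ x ∈ U, 2 * ν * (f x - f xs) ≤ ‖gradient f x‖ ^ 2

/-- The Lyapunov function
`𝓛(p, v) = f p − f xs + (β/(2α))‖v‖² − (β²/(2(1+β))) ⟨∇²f(xs) v, v⟩`,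
where the Hessian `∇²f(xs)` is the derivative of the gradient at `xs`. -/
noncomputable def lyap {d : ℕ} (f : EuclideanSpace ℝ (Fin d) → ℝ)
    (xs : EuclideanSpace ℝ (Fin d)) (α β : ℝ) (p v : EuclideanSpace ℝ (Fin d)) : ℝ :=
  f p - f xs + (β / (2 * α)) * ‖v‖ ^ 2
    - (β ^ 2 / (2 * (1 + β))) * ⟪fderiv ℝ (gradient f) xs v, v⟫


variable {d : ℕ}
local notation "E" => EuclideanSpace ℝ (Fin d)

lemma toDual_symm_blm : IsBoundedLinearMap ℝ
    (fun y : StrongDual ℝ (EuclideanSpace ℝ (Fin d)) =>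
      (InnerProductSpace.toDual ℝ (EuclideanSpace ℝ (Fin d))).symm y) where
  map_add := by simp
  map_smul := by intro c y; simp [LinearIsometryEquiv.map_smulₛₗ]
  bound := ⟨1, one_pos, fun y => by simp⟩

lemma contDiff_gradient (f : EuclideanSpace ℝ (Fin d) → ℝ) (hf : ContDiff ℝ 2 f) :
    ContDiff ℝ 1 (gradient f) :=
  (toDual_symm_blm.contDiff).comp (hf.fderiv_right (by norm_num))

lemma fderiv_gradient_eq (f : EuclideanSpace ℝ (Fin d) → ℝ) (hf : ContDiff ℝ 2 f)
    (xs : EuclideanSpace ℝ (Fin d)) (v w : EuclideanSpace ℝ (Fin d)) :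
    ⟪fderiv ℝ (gradient f) xs v, w⟫ = fderiv ℝ (fderiv ℝ f) xs v w := by
  have hD : DifferentiableAt ℝ (fderiv ℝ f) xs :=
    ((hf.fderiv_right (m := 1) (by norm_num)).differentiable one_ne_zero) xs
  have hcomp : fderiv ℝ (gradient f) xs =
      (toDual_symm_blm (d := d)).toContinuousLinearMap.comp (fderiv ℝ (fderiv ℝ f) xs) := by
    rw [show gradient f = (fun y => (InnerProductSpace.toDual ℝ _).symm y) ∘ fderiv ℝ f from rfl]
    rw [fderiv_comp xs (toDual_symm_blm.differentiableAt) hD]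
    congr 1
    exact toDual_symm_blm.fderiv
  rw [hcomp]
  exact InnerProductSpace.toDual_symm_apply

lemma hessian_symm (f : EuclideanSpace ℝ (Fin d) → ℝ) (hf : ContDiff ℝ 2 f)
    (xs : EuclideanSpace ℝ (Fin d)) (v w : EuclideanSpace ℝ (Fin d)) :
    ⟪fderiv ℝ (gradient f) xs v, w⟫ = ⟪v, fderiv ℝ (gradient f) xs w⟫ := by
  have hsch := (hf.contDiffAt (x := xs)).isSymmSndFDerivAt (by simp [minSmoothness_of_isRCLikeNormedField])
  rw [fderiv_gradient_eq f hf xs v w, real_inner_comm, fderiv_gradient_eq f hf xs w v]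
  exact hsch v w

lemma inner_le_greatest_eigen (f : EuclideanSpace ℝ (Fin d) → ℝ) (hf : ContDiff ℝ 2 f)
    (xs : EuclideanSpace ℝ (Fin d)) (L : ℝ)
    (hL : IsGreatest {c : ℝ | ∃ v, v ≠ 0 ∧ fderiv ℝ (gradient f) xs v = c • v} L)
    (v : EuclideanSpace ℝ (Fin d)) :
    ⟪fderiv ℝ (gradient f) xs v, v⟫ ≤ L * ‖v‖ ^ 2 := by
  obtain ⟨v0, hv0, -⟩ := hL.1
  haveI : Nontrivial (EuclideanSpace ℝ (Fin d)) := ⟨⟨v0, 0, hv0⟩⟩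
  set H := fderiv ℝ (gradient f) xs with hH
  set T : EuclideanSpace ℝ (Fin d) →ₗ[ℝ] EuclideanSpace ℝ (Fin d) := ↑H with hT
  have hsym : T.IsSymmetric := fun x y => hessian_symm f hf xs x y
  set lm : ℝ := ⨆ x : { x : EuclideanSpace ℝ (Fin d) // x ≠ 0 },
    RCLike.re ⟪T x, x⟫ / ‖(x : EuclideanSpace ℝ (Fin d))‖ ^ 2 with hlm
  have hev := hsym.hasEigenvalue_iSup_of_finiteDimensional
  obtain ⟨w, hw⟩ := hev.exists_hasEigenvector
  have hmem : lm ∈ {c : ℝ | ∃ v, v ≠ 0 ∧ fderiv ℝ (gradient f) xs v = c • v} :=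
    ⟨w, hw.2, hw.apply_eq_smul⟩
  have hlmL : lm ≤ L := hL.2 hmem
  rcases eq_or_ne v 0 with rfl | hv
  · simp
  · have hbdd : BddAbove (Set.range fun x : { x : EuclideanSpace ℝ (Fin d) // x ≠ 0 } =>
        RCLike.re ⟪T x, x⟫ / ‖(x : EuclideanSpace ℝ (Fin d))‖ ^ 2) := by
      refine ⟨‖H‖, ?_⟩
      rintro y ⟨x, rfl⟩
      have hx : (0:ℝ) < ‖(x : EuclideanSpace ℝ (Fin d))‖ ^ 2 :=
        pow_pos (norm_pos_iff.mpr x.2) 2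
      rw [div_le_iff₀ hx]
      simp only [RCLike.re_to_real]
      calc ⟪T x, x⟫ ≤ ‖H (x : EuclideanSpace ℝ (Fin d))‖ * ‖(x : EuclideanSpace ℝ (Fin d))‖ :=
            real_inner_le_norm _ _
        _ ≤ (‖H‖ * ‖(x : EuclideanSpace ℝ (Fin d))‖) * ‖(x : EuclideanSpace ℝ (Fin d))‖ := by
            gcongr; exact H.le_opNorm _
        _ = ‖H‖ * ‖(x : EuclideanSpace ℝ (Fin d))‖ ^ 2 := by ring
    have hle : RCLike.re ⟪T v, v⟫ / ‖v‖ ^ 2 ≤ lm :=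
      le_ciSup hbdd (⟨v, hv⟩ : { x : EuclideanSpace ℝ (Fin d) // x ≠ 0 })
    have hv2 : (0:ℝ) < ‖v‖ ^ 2 := pow_pos (norm_pos_iff.mpr hv) 2
    simp only [RCLike.re_to_real] at hle
    have : ⟪H v, v⟫ / ‖v‖ ^ 2 ≤ L := le_trans hle hlmL
    calc ⟪H v, v⟫ = (⟪H v, v⟫ / ‖v‖ ^ 2) * ‖v‖ ^ 2 := by field_simp
      _ ≤ L * ‖v‖ ^ 2 := by exact mul_le_mul_of_nonneg_right this hv2.le

lemma toDual_grad (f : EuclideanSpace ℝ (Fin d) → ℝ) (z : EuclideanSpace ℝ (Fin d)) :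
    InnerProductSpace.toDual ℝ (EuclideanSpace ℝ (Fin d)) (gradient f z) = fderiv ℝ f z :=
  (InnerProductSpace.toDual ℝ (EuclideanSpace ℝ (Fin d))).apply_symm_apply _

lemma inner_grad (f : EuclideanSpace ℝ (Fin d) → ℝ) (z u : EuclideanSpace ℝ (Fin d)) :
    ⟪gradient f z, u⟫ = fderiv ℝ f z u :=
  InnerProductSpace.toDual_symm_apply

lemma grad_sq_le (f : EuclideanSpace ℝ (Fin d) → ℝ) (hf : ContDiff ℝ 2 f)
    (xs : EuclideanSpace ℝ (Fin d)) (hmin : IsLocalMin f xs) :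
    ∃ r > (0:ℝ), ∃ M > (0:ℝ), ∀ x ∈ Metric.ball xs r,
      ‖gradient f x‖ ^ 2 ≤ 4 * M * (f x - f xs) := by
  have hg1 := contDiff_gradient f hf
  obtain ⟨K, t, ht, hlip⟩ := (hg1.contDiffAt (x := xs)).exists_lipschitzOnWith
  obtain ⟨ε, hε, hmin'⟩ := Metric.eventually_nhds_iff.mp hmin
  obtain ⟨ε₂, hε₂, ht₂⟩ := Metric.mem_nhds_iff.mp ht
  set R : ℝ := min ε ε₂ with hR
  have hR0 : 0 < R := lt_min hε hε₂
  set M : ℝ := (K : ℝ) + 1 with hM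
  have hM0 : 0 < M := by positivity
  refine ⟨R / 6, by positivity, M, hM0, ?_⟩
  intro x hx
  rw [Metric.mem_ball, dist_eq_norm] at hx
  set G := gradient f x with hG
  -- Lipschitz bound for the gradient on `ball xs ε₂`
  have hlip' : ∀ z w : EuclideanSpace ℝ (Fin d), z ∈ Metric.ball xs ε₂ →
      w ∈ Metric.ball xs ε₂ → ‖gradient f z - gradient f w‖ ≤ M * ‖z - w‖ := by
    intro z w hz hw
    have := hlip.dist_le_mul z (ht₂ hz) w (ht₂ hw)
    rw [dist_eq_norm, dist_eq_norm] at this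
    refine this.trans ?_
    have : ‖z - w‖ ≥ 0 := norm_nonneg _
    nlinarith [K.coe_nonneg]
  have hgxs : gradient f xs = 0 := by
    rw [gradient, hmin.fderiv_eq_zero, map_zero]
  have hxball : x ∈ Metric.ball xs ε₂ := by
    rw [Metric.mem_ball, dist_eq_norm]
    calc ‖x - xs‖ < R / 6 := hx
      _ ≤ ε₂ := by have := min_le_right ε ε₂; linarith
  have hGb : ‖G‖ ≤ M * ‖x - xs‖ := by
    have := hlip' x xs hxball (Metric.mem_ball_self hε₂)
    simpa [hgxs] using this
  set y := x - (1 / (2 * M)) • G with hy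
  have hyx : ‖y - x‖ = 1 / (2 * M) * ‖G‖ := by
    rw [hy]
    rw [show x - (1 / (2 * M)) • G - x = -((1 / (2 * M)) • G) by abel]
    rw [norm_neg, norm_smul, Real.norm_eq_abs, abs_of_pos (by positivity)]
  have hyxle : ‖y - x‖ ≤ ‖x - xs‖ / 2 := by
    rw [hyx]
    calc 1 / (2 * M) * ‖G‖ ≤ 1 / (2 * M) * (M * ‖x - xs‖) := by
          apply mul_le_mul_of_nonneg_left hGb (by positivity)
      _ = ‖x - xs‖ / 2 := by field_simp
  have hyxs : ‖y - xs‖ ≤ R / 4 := by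
    calc ‖y - xs‖ = ‖(y - x) + (x - xs)‖ := by abel_nf
      _ ≤ ‖y - x‖ + ‖x - xs‖ := norm_add_le _ _
      _ ≤ ‖x - xs‖ / 2 + ‖x - xs‖ := by linarith
      _ ≤ R / 4 := by linarith
  -- the convex set on which we apply the mean value inequality
  set s : Set (EuclideanSpace ℝ (Fin d)) :=
    Metric.closedBall x ‖y - x‖ ∩ Metric.closedBall xs (R / 2) with hs
  have hconv : Convex ℝ s := (convex_closedBall _ _).inter (convex_closedBall _ _)
  have hxs_mem : x ∈ s := by
    constructor
    · exact Metric.mem_closedBall_self (norm_nonneg _)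
    · rw [Metric.mem_closedBall, dist_eq_norm]; linarith
  have hys_mem : y ∈ s := by
    constructor
    · rw [Metric.mem_closedBall, dist_eq_norm]
    · rw [Metric.mem_closedBall, dist_eq_norm]; linarith
  have hsub : s ⊆ Metric.ball xs ε₂ := by
    intro z hz
    rw [Metric.mem_ball]
    have := hz.2
    rw [Metric.mem_closedBall] at this
    have hRe : R ≤ ε₂ := min_le_right ε ε₂
    linarith
  have hbound : ∀ z ∈ s, ‖fderiv ℝ f z - fderiv ℝ f x‖ ≤ M * ‖y - x‖ := by
    intro z hz
    have h1 : fderiv ℝ f z - fderiv ℝ f x =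
        InnerProductSpace.toDual ℝ (EuclideanSpace ℝ (Fin d)) (gradient f z - gradient f x) := by
      rw [map_sub, toDual_grad, toDual_grad]
    rw [h1, LinearIsometryEquiv.norm_map]
    have hzx : ‖z - x‖ ≤ ‖y - x‖ := by
      have := hz.1; rw [Metric.mem_closedBall, dist_eq_norm] at this; exact this
    calc ‖gradient f z - gradient f x‖ ≤ M * ‖z - x‖ := hlip' z x (hsub hz) hxball
      _ ≤ M * ‖y - x‖ := by apply mul_le_mul_of_nonneg_left hzx hM0.le
  have hdiff : ∀ z ∈ s, DifferentiableAt ℝ f z := fun z _ =>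
    (hf.differentiable (by norm_num)) z
  have hmv := hconv.norm_image_sub_le_of_norm_fderiv_le' hdiff hbound hxs_mem hys_mem
  have hfd : fderiv ℝ f x (y - x) = -(1 / (2 * M)) * ‖G‖ ^ 2 := by
    rw [← inner_grad, ← hG]
    rw [show y - x = -((1 / (2 * M)) • G) by rw [hy]; abel]
    rw [inner_neg_right, real_inner_smul_right, real_inner_self_eq_norm_sq]
    ring
  have h2 : f y - f x - fderiv ℝ f x (y - x) ≤ M * ‖y - x‖ * ‖y - x‖ :=
    (le_abs_self _).trans (by rwa [Real.norm_eq_abs] at hmv)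
  have hfy : f xs ≤ f y := by
    apply hmin'
    rw [dist_eq_norm]
    have hRe : R ≤ ε := min_le_left ε ε₂
    linarith
  rw [hfd, hyx] at h2
  have hM2 : (0:ℝ) < 2 * M := by positivity
  have hexp : M * (1 / (2 * M) * ‖G‖) * (1 / (2 * M) * ‖G‖) = ‖G‖ ^ 2 / (4 * M) := by
    field_simp; ring
  rw [hexp] at h2
  have e1 : 1 / (2 * M) * ‖G‖ ^ 2 = 2 * (‖G‖ ^ 2 / (4 * M)) := by
    field_simp; ring
  have h3 : ‖G‖ ^ 2 / (4 * M) ≤ f x - f xs := by linarith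
  have h4 := (div_le_iff₀ (by positivity : (0:ℝ) < 4 * M)).mp h3
  linarith


/-- If `f : ℝ^d → ℝ` is `C²` and satisfies the local PL condition at a local
minimizer `xs`, `L` is the largest eigenvalue of the Hessian `∇²f(xs)`, `β ∈ (0,1)` and
`α ∈ (0, (1+β)/(Lβ))`, then there are an open neighborhood `U` of `xs` and constants
`c₁, c₂ > 0` with `c₁(‖∇f(x)‖² + ‖v‖²) ≤ 𝓛(x, v) ≤ c₂(‖∇f(x)‖² + ‖v‖²)` for all `x ∈ U`
and `v ∈ ℝ^d`. -/
theorem stmt_5 {d : ℕ} (f : EuclideanSpace ℝ (Fin d) → ℝ) (hf : ContDiff ℝ 2 f)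
    (xs : EuclideanSpace ℝ (Fin d)) (hmin : IsLocalMin f xs) (hPL : LocalPL f xs) (L : ℝ)
    (hL : IsGreatest {c : ℝ | ∃ v, v ≠ 0 ∧ fderiv ℝ (gradient f) xs v = c • v} L)
    (β : ℝ) (hβ0 : 0 < β) (hβ1 : β < 1)
    (α : ℝ) (hα0 : 0 < α) (hα1 : α < (1 + β) / (L * β)) :
    ∃ U : Set (EuclideanSpace ℝ (Fin d)), IsOpen U ∧ xs ∈ U ∧
      ∃ c₁ : ℝ, 0 < c₁ ∧ ∃ c₂ : ℝ, 0 < c₂ ∧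
        ∀ x ∈ U, ∀ v : EuclideanSpace ℝ (Fin d),
          c₁ * (‖gradient f x‖ ^ 2 + ‖v‖ ^ 2) ≤ lyap f xs α β x v ∧
          lyap f xs α β x v ≤ c₂ * (‖gradient f x‖ ^ 2 + ‖v‖ ^ 2) := by
  obtain ⟨U₁, hU₁o, hU₁x, ν, hν, hPL'⟩ := hPL
  obtain ⟨r, hr, M, hM, hgrad⟩ := grad_sq_le f hf xs hmin
  have hL0 : 0 < L := by
    by_contra h
    push_neg at h
    have h1 : L * β ≤ 0 := mul_nonpos_of_nonpos_of_nonneg h hβ0.le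
    have h2 : (1 + β) / (L * β) ≤ 0 := div_nonpos_of_nonneg_of_nonpos (by linarith) h1
    linarith
  have hαβL : α * (L * β) < 1 + β := (lt_div_iff₀ (by positivity)).mp hα1
  have hHL : ∀ v : EuclideanSpace ℝ (Fin d),
      ⟪fderiv ℝ (gradient f) xs v, v⟫ ≤ L * ‖v‖ ^ 2 :=
    inner_le_greatest_eigen f hf xs L hL
  set C : ℝ := ‖fderiv ℝ (gradient f) xs‖ with hC
  have hC0 : 0 ≤ C := norm_nonneg _
  have habs : ∀ v : EuclideanSpace ℝ (Fin d),
      |⟪fderiv ℝ (gradient f) xs v, v⟫| ≤ C * ‖v‖ ^ 2 := by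
    intro v
    calc |⟪fderiv ℝ (gradient f) xs v, v⟫| ≤ ‖fderiv ℝ (gradient f) xs v‖ * ‖v‖ :=
          abs_real_inner_le_norm _ _
      _ ≤ (C * ‖v‖) * ‖v‖ := by
          gcongr; exact (fderiv ℝ (gradient f) xs).le_opNorm v
      _ = C * ‖v‖ ^ 2 := by ring
  set c : ℝ := β / (2 * α) - L * β ^ 2 / (2 * (1 + β)) with hc
  have hc0 : 0 < c := by
    have h1 : L * β ^ 2 / (2 * (1 + β)) < β / (2 * α) := by
      rw [div_lt_div_iff₀ (by positivity) (by positivity)]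
      nlinarith
    rw [hc]; linarith
  set c2q : ℝ := β / (2 * α) + β ^ 2 / (2 * (1 + β)) * C with hc2q
  have hc2q0 : 0 < c2q := by positivity
  refine ⟨U₁ ∩ Metric.ball xs r, hU₁o.inter Metric.isOpen_ball,
    ⟨hU₁x, Metric.mem_ball_self hr⟩, min (1 / (4 * M)) c, lt_min (by positivity) hc0,
    max (1 / (2 * ν)) c2q, lt_of_lt_of_le (by positivity) (le_max_left _ _), ?_⟩
  intro x hx v
  set c₁ : ℝ := min (1 / (4 * M)) c with hc₁
  set c₂ : ℝ := max (1 / (2 * ν)) c2q with hc₂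
  set a : ℝ := ‖gradient f x‖ ^ 2 with ha
  set b : ℝ := ‖v‖ ^ 2 with hb
  have ha0 : 0 ≤ a := sq_nonneg _
  have hb0 : 0 ≤ b := sq_nonneg _
  set q : ℝ := ⟪fderiv ℝ (gradient f) xs v, v⟫ with hq
  have hA1 : a ≤ 4 * M * (f x - f xs) := hgrad x hx.2
  have hA2 : 2 * ν * (f x - f xs) ≤ a := hPL' x hx.1
  have hHLv : q ≤ L * b := hHL v
  have habsv : |q| ≤ C * b := habs v
  have hc₁c : c₁ ≤ c := min_le_right _ _
  have hc₁M : c₁ ≤ 1 / (4 * M) := min_le_left _ _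
  have hc₂ν : 1 / (2 * ν) ≤ c₂ := le_max_left _ _
  have hc₂q : c2q ≤ c₂ := le_max_right _ _
  have hlyap : lyap f xs α β x v =
      (f x - f xs) + (β / (2 * α) * b - β ^ 2 / (2 * (1 + β)) * q) := by
    rw [lyap, ← hb, ← hq]; ring
  clear_value a b q c c2q C c₁ c₂
  have hq1 : c * b ≤ β / (2 * α) * b - β ^ 2 / (2 * (1 + β)) * q := by
    have h1 : β ^ 2 / (2 * (1 + β)) * q ≤ β ^ 2 / (2 * (1 + β)) * (L * b) :=
      mul_le_mul_of_nonneg_left hHLv (by positivity)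
    have h2 : c * b = β / (2 * α) * b - β ^ 2 / (2 * (1 + β)) * (L * b) := by
      rw [hc]; ring
    linarith
  have hq2 : β / (2 * α) * b - β ^ 2 / (2 * (1 + β)) * q ≤ c2q * b := by
    have h1 : -q ≤ C * b := by
      rw [abs_le] at habsv
      linarith [habsv.1]
    have h2 : β ^ 2 / (2 * (1 + β)) * (-q) ≤ β ^ 2 / (2 * (1 + β)) * (C * b) :=
      mul_le_mul_of_nonneg_left h1 (by positivity)
    have h3 : c2q * b = β / (2 * α) * b + β ^ 2 / (2 * (1 + β)) * (C * b) := by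
      rw [hc2q]; ring
    linarith
  constructor
  · -- lower bound
    have hAl : c₁ * a ≤ f x - f xs := by
      have h1 : c₁ * a ≤ 1 / (4 * M) * a :=
        mul_le_mul_of_nonneg_right hc₁M ha0
      have h2 : 1 / (4 * M) * a ≤ f x - f xs := by
        rw [div_mul_eq_mul_div, one_mul, div_le_iff₀ (by positivity)]
        linarith
      linarith
    have hQl : c₁ * b ≤ β / (2 * α) * b - β ^ 2 / (2 * (1 + β)) * q := by
      have h1 : c₁ * b ≤ c * b := mul_le_mul_of_nonneg_right hc₁c hb0
      linarith
    have : c₁ * (a + b) = c₁ * a + c₁ * b := by ring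
    rw [hlyap]; linarith
  · -- upper bound
    have hAu : f x - f xs ≤ c₂ * a := by
      have h1 : f x - f xs ≤ 1 / (2 * ν) * a := by
        rw [div_mul_eq_mul_div, one_mul, le_div_iff₀ (by positivity)]
        linarith
      have h2 : 1 / (2 * ν) * a ≤ c₂ * a :=
        mul_le_mul_of_nonneg_right hc₂ν ha0
      linarith
    have hQu : β / (2 * α) * b - β ^ 2 / (2 * (1 + β)) * q ≤ c₂ * b := by
      have h1 : c2q * b ≤ c₂ * b := mul_le_mul_of_nonneg_right hc₂q hb0
      linarith
    have : c₂ * (a + b) = c₂ * a + c₂ * b := by ring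
    rw [hlyap]; linarith
end

section
/- For all real numbers L ≥ μ > 0, the inequality (√(3L+μ) − 2√μ)/√(3L+μ) ≤ (L − μ)/(L + μ) holds, with strict inequality whenever L > μ. -/
/-- For all real numbers `L ≥ μ > 0`, the optimal local linear rate of
Nesterov's accelerated gradient method, `(√(3L+μ) − 2√μ)/√(3L+μ)`, is at most the optimal
local linear rate of gradient descent, `(L − μ)/(L + μ)`, with strict inequality when `L > μ`. -/
theorem stmt_9 (μ L : ℝ) (hμ : 0 < μ) (hμL : μ ≤ L) :
    (Real.sqrt (3 * L + μ) - 2 * Real.sqrt μ) / Real.sqrt (3 * L + μ) ≤ (L - μ) / (L + μ) ∧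
    (μ < L →
      (Real.sqrt (3 * L + μ) - 2 * Real.sqrt μ) / Real.sqrt (3 * L + μ) < (L - μ) / (L + μ)) := by
  have hL : 0 < L := lt_of_lt_of_le hμ hμL
  have harg : (0:ℝ) < 3 * L + μ := by linarith
  have hs : 0 < Real.sqrt (3 * L + μ) := Real.sqrt_pos.mpr harg
  have ht : 0 < Real.sqrt μ := Real.sqrt_pos.mpr hμ
  have hc : 0 < L + μ := by linarith
  have hs2 : Real.sqrt (3 * L + μ) ^ 2 = 3 * L + μ := Real.sq_sqrt harg.le
  have ht2 : Real.sqrt μ ^ 2 = μ := Real.sq_sqrt hμ.le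
  constructor
  · rw [div_le_div_iff₀ hs hc]
    have key : μ * Real.sqrt (3 * L + μ) ≤ Real.sqrt μ * (L + μ) := by
      have h1 : (μ * Real.sqrt (3 * L + μ)) ^ 2 ≤ (Real.sqrt μ * (L + μ)) ^ 2 := by
        rw [mul_pow, mul_pow, hs2, ht2]
        nlinarith [mul_nonneg (mul_nonneg hμ.le hL.le) (sub_nonneg.mpr hμL)]
      exact (pow_le_pow_iff_left₀ (by positivity) (by positivity) two_ne_zero).mp h1
    nlinarith
  · intro hlt
    rw [div_lt_div_iff₀ hs hc]
    have key : μ * Real.sqrt (3 * L + μ) < Real.sqrt μ * (L + μ) := by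
      have h1 : (μ * Real.sqrt (3 * L + μ)) ^ 2 < (Real.sqrt μ * (L + μ)) ^ 2 := by
        rw [mul_pow, mul_pow, hs2, ht2]
        nlinarith [mul_pos (mul_pos hμ hL) (sub_pos.mpr hlt)]
      exact (pow_lt_pow_iff_left₀ (by positivity) (by positivity) two_ne_zero).mp h1
    nlinarith
end

section
/- Let G be a symmetric linear map on a finite-dimensional real inner product space N and let β ∈ ℝ. Then a complex number λ is an eigenvalue of the block operator G̃ on N × N defined by G̃(a, b) := ((1+β)G a − β G b, a) if and only if there exists a (real) eigenvalue m of G such that λ² − (1+β) m λ + β m = 0. -/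
open Polynomial Matrix

lemma charmatrix_blockDiagonal' {o m R : Type*} [DecidableEq o] [DecidableEq m]
    [Fintype o] [Fintype m] [CommRing R] (M : o → Matrix m m R) :
    charmatrix (blockDiagonal M) = blockDiagonal (fun k => charmatrix (M k)) := by
  apply Matrix.ext
  rintro ⟨i, k⟩ ⟨j, l⟩
  simp only [charmatrix_apply, blockDiagonal_apply, Matrix.diagonal_apply, Prod.mk.injEq]
  by_cases h : k = l
  · subst h
    by_cases hij : i = j
    · subst hij; simp
    · simp [hij]
  · simp [h]

lemma charpoly_blockDiagonal' {o m R : Type*} [DecidableEq o] [DecidableEq m]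
    [Fintype o] [Fintype m] [CommRing R] (M : o → Matrix m m R) :
    (blockDiagonal M).charpoly = ∏ k, (M k).charpoly := by
  simp only [Matrix.charpoly, charmatrix_blockDiagonal', det_blockDiagonal]

lemma charpoly_companion2 {R : Type*} [CommRing R] (a b : R) :
    (!![a, b; (1 : R), 0]).charpoly = X ^ 2 - C a * X - C b := by
  rw [Matrix.charpoly, Matrix.det_fin_two]
  simp [charmatrix_apply, Matrix.diagonal_apply]
  ring

/-- Let `G` be a symmetric linear map on a finite-dimensional real inner
product space `N` and `β ∈ ℝ`.  A complex number `λ` is an eigenvalue (a root of the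
characteristic polynomial over `ℂ`) of the block operator `G̃(a,b) := ((1+β)Ga − βGb, a)`
on `N × N` if and only if there is a real eigenvalue `m` of `G` with
`λ² − (1+β) m λ + β m = 0`. -/
theorem stmt_10 {N : Type*} [NormedAddCommGroup N] [InnerProductSpace ℝ N]
    [FiniteDimensional ℝ N] (G : N →ₗ[ℝ] N) (hG : LinearMap.IsSymmetric G) (β : ℝ) :
    ∀ lam : ℂ,
      lam ∈ (LinearMap.charpoly
          (LinearMap.prod
            ((((1 + β) • G).comp (LinearMap.fst ℝ N N)) -
              ((β • G).comp (LinearMap.snd ℝ N N)))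
            (LinearMap.fst ℝ N N))).rootSet ℂ ↔
        ∃ m : ℝ, (∃ v : N, v ≠ 0 ∧ G v = m • v) ∧
          lam ^ 2 - (((1 + β) * m : ℝ) : ℂ) * lam + ((β * m : ℝ) : ℂ) = 0 := by
  intro lam
  classical
  set Gt : (N × N) →ₗ[ℝ] (N × N) :=
    LinearMap.prod
      ((((1 + β) • G).comp (LinearMap.fst ℝ N N)) -
        ((β • G).comp (LinearMap.snd ℝ N N)))
      (LinearMap.fst ℝ N N) with hGt
  have hrank : Module.finrank ℝ N = Module.finrank ℝ N := rfl
  set n := Module.finrank ℝ N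
  let b := hG.eigenvectorBasis hrank
  let μ := hG.eigenvalues hrank
  let B : Module.Basis (Fin n ⊕ Fin n) ℝ (N × N) := b.toBasis.prod b.toBasis
  let blocks : Fin n → Matrix (Fin 2) (Fin 2) ℝ :=
    fun k => !![(1 + β) * μ k, -(β * μ k); 1, 0]
  let e : (Fin 2 × Fin n) ≃ (Fin n ⊕ Fin n) :=
    { toFun := fun p => if p.1 = 0 then Sum.inl p.2 else Sum.inr p.2
      invFun := fun s => Sum.elim (fun k => ((0 : Fin 2), k)) (fun k => ((1 : Fin 2), k)) s
      left_inv := by rintro ⟨i, k⟩; fin_cases i <;> simp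
      right_inv := by rintro (k | k) <;> simp }
  have hB1 : ∀ j, B (Sum.inl j) = (b j, 0) := by
    intro j
    exact Prod.ext (b.toBasis.prod_apply_inl_fst b.toBasis j)
      (b.toBasis.prod_apply_inl_snd b.toBasis j)
  have hB2 : ∀ j, B (Sum.inr j) = (0, b j) := by
    intro j
    exact Prod.ext (b.toBasis.prod_apply_inr_fst b.toBasis j)
      (b.toBasis.prod_apply_inr_snd b.toBasis j)
  have hGb : ∀ j, G (b j) = μ j • b j := fun j => hG.apply_eigenvectorBasis hrank j
  have hM : LinearMap.toMatrix B B Gt = Matrix.reindex e e (blockDiagonal blocks) := by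
    ext i j
    rw [LinearMap.toMatrix_apply]
    rcases i with i | i <;> rcases j with j | j
    · rw [hB1]
      have : Gt (b j, 0) = ((1 + β) • (μ j • b j), b j) := by
        simp [hGt, LinearMap.prod_apply, hGb]
      rw [this]
      have : B.repr ((1 + β) • (μ j • b j), b j) (Sum.inl i)
          = b.toBasis.repr ((1 + β) • (μ j • b j)) i := rfl
      rw [this, _root_.map_smul, _root_.map_smul, ← OrthonormalBasis.coe_toBasis b, Module.Basis.repr_self]
      simp [Matrix.reindex_apply, blockDiagonal_apply, e, blocks, Finsupp.single_apply]
      rcases eq_or_ne j i with h | h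
      · subst h; simp
      · simp [h, Ne.symm h]
    · rw [hB2]
      have : Gt (0, b j) = (-(β • (μ j • b j)), 0) := by
        simp [hGt, LinearMap.prod_apply, hGb]
      rw [this]
      have : B.repr (-(β • (μ j • b j)), 0) (Sum.inl i)
          = b.toBasis.repr (-(β • (μ j • b j))) i := rfl
      rw [this, map_neg, _root_.map_smul, _root_.map_smul, ← OrthonormalBasis.coe_toBasis b, Module.Basis.repr_self]
      simp [Matrix.reindex_apply, blockDiagonal_apply, e, blocks, Finsupp.single_apply]
      rcases eq_or_ne j i with h | h
      · subst h; simp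
      · simp [h, Ne.symm h]
    · rw [hB1]
      have : Gt (b j, 0) = ((1 + β) • (μ j • b j), b j) := by
        simp [hGt, LinearMap.prod_apply, hGb]
      rw [this]
      have : B.repr ((1 + β) • (μ j • b j), b j) (Sum.inr i)
          = b.toBasis.repr (b j) i := rfl
      rw [this, ← OrthonormalBasis.coe_toBasis b, Module.Basis.repr_self]
      simp [Matrix.reindex_apply, blockDiagonal_apply, e, blocks, Finsupp.single_apply]
      rcases eq_or_ne j i with h | h
      · subst h; simp
      · simp [h, Ne.symm h]
    · rw [hB2]
      have : Gt (0, b j) = (-(β • (μ j • b j)), 0) := by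
        simp [hGt, LinearMap.prod_apply, hGb]
      rw [this]
      have : B.repr (-(β • (μ j • b j)), 0) (Sum.inr i)
          = b.toBasis.repr (0 : N) i := rfl
      rw [this]
      simp [Matrix.reindex_apply, blockDiagonal_apply, e, blocks]
  have key : Gt.charpoly
      = ∏ k : Fin n, (X ^ 2 - C ((1 + β) * μ k) * X + C (β * μ k)) := by
    rw [← LinearMap.charpoly_toMatrix Gt B, hM]
    rw [show Matrix.reindex e e (blockDiagonal blocks)
        = Matrix.reindex e e (blockDiagonal blocks) from rfl]
    rw [Matrix.charpoly_reindex, charpoly_blockDiagonal']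
    refine Finset.prod_congr rfl fun k _ => ?_
    rw [show blocks k = !![(1 + β) * μ k, -(β * μ k); 1, 0] from rfl,
      charpoly_companion2, map_neg, sub_neg_eq_add]
  have hne : Gt.charpoly ≠ 0 := (LinearMap.charpoly_monic Gt).ne_zero
  rw [Polynomial.mem_rootSet]
  constructor
  · rintro ⟨-, h⟩
    rw [key, map_prod] at h
    obtain ⟨k, -, hk⟩ := Finset.prod_eq_zero_iff.mp h
    refine ⟨μ k, ⟨b k, (hG.hasEigenvector_eigenvectorBasis hrank k).2, hGb k⟩, ?_⟩
    simpa [Complex.coe_algebraMap] using hk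
  · rintro ⟨m, ⟨v, hv0, hvm⟩, hquad⟩
    have hex : ∃ k, b.repr v k ≠ 0 := by
      by_contra h
      push_neg at h
      apply hv0
      have hz : b.repr v = 0 := by
        ext k; exact h k
      simpa using congrArg b.repr.symm hz
    obtain ⟨k, hk⟩ := hex
    have h1 := hG.eigenvectorBasis_apply_self_apply hrank v k
    rw [hvm, _root_.map_smul] at h1
    have hmk : μ k = m := by
      have : m * b.repr v k = μ k * b.repr v k := by
        simpa using h1
      exact (mul_right_cancel₀ hk this.symm)
    refine ⟨hne, ?_⟩
    rw [key, map_prod]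
    apply Finset.prod_eq_zero (Finset.mem_univ k)
    rw [hmk]
    simpa [Complex.coe_algebraMap] using hquad
end

section
/- Let β ∈ [0,1) and m ∈ ℝ. Both complex roots of the quadratic λ² − (1+β) m λ + β m = 0 have modulus strictly less than 1 if and only if the three Schur conditions hold: 1 − m > 0, 1 + (1+2β) m > 0, and β|m| < 1. -/
open Complex

private lemma root_factor {B C : ℝ} {lam : ℂ}
    (h : lam ^ 2 - (B : ℂ) * lam + (C : ℂ) = 0) (z : ℂ) :
    (z - lam) * (z - ((B : ℂ) - lam)) = z ^ 2 - (B : ℂ) * z + (C : ℂ) := by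
  linear_combination -h

private lemma conj_root {B C : ℝ} {lam : ℂ}
    (h : lam ^ 2 - (B : ℂ) * lam + (C : ℂ) = 0) (him : lam.im ≠ 0) :
    (B : ℂ) - lam = (starRingEnd ℂ) lam := by
  have hc : (starRingEnd ℂ) lam ^ 2 - (B : ℂ) * (starRingEnd ℂ) lam + (C : ℂ) = 0 := by
    have h2 := congrArg (starRingEnd ℂ) h
    simpa [map_sub, map_add, map_mul, map_pow, Complex.conj_ofReal] using h2
  have h0 : ((starRingEnd ℂ) lam - lam) * ((starRingEnd ℂ) lam - ((B : ℂ) - lam)) = 0 := by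
    rw [root_factor h, hc]
  have hne : (starRingEnd ℂ) lam - lam ≠ 0 := by
    intro hh
    exact him (Complex.conj_eq_iff_im.mp (sub_eq_zero.mp hh))
  rcases mul_eq_zero.mp h0 with h' | h'
  · exact absurd h' hne
  · exact (sub_eq_zero.mp h').symm

/-- For `β ∈ [0,1)` and `m ∈ ℝ`, both complex roots of
`λ² − (1+β) m λ + β m = 0` have modulus strictly less than `1` if and only if the three Schur
conditions hold: `1 − m > 0`, `1 + (1+2β) m > 0`, and `β |m| < 1`. -/
theorem stmt_12 (β m : ℝ) (hβ0 : 0 ≤ β) (hβ1 : β < 1) :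
    (∀ lam : ℂ,
        lam ^ 2 - (((1 + β) * m : ℝ) : ℂ) * lam + ((β * m : ℝ) : ℂ) = 0 →
        ‖lam‖ < 1) ↔
      (0 < 1 - m ∧ 0 < 1 + (1 + 2 * β) * m ∧ β * |m| < 1) := by
  have habsC : |β * m| = β * |m| := by rw [abs_mul, _root_.abs_of_nonneg hβ0]
  constructor
  · intro H
    obtain ⟨e, he⟩ : ∃ e : ℂ, e ^ 2 = ((((1 + β) * m) ^ 2 - 4 * (β * m) : ℝ) : ℂ) :=
      IsAlgClosed.exists_pow_nat_eq _ (by norm_num)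
    set lam : ℂ := ((((1 + β) * m : ℝ) : ℂ) + e) / 2 with hlam
    have hroot : lam ^ 2 - (((1 + β) * m : ℝ) : ℂ) * lam + ((β * m : ℝ) : ℂ) = 0 := by
      push_cast at he ⊢
      rw [hlam]; push_cast
      linear_combination he / 4
    set mu : ℂ := (((1 + β) * m : ℝ) : ℂ) - lam with hmu
    have hrootmu : mu ^ 2 - (((1 + β) * m : ℝ) : ℂ) * mu + ((β * m : ℝ) : ℂ) = 0 := by
      rw [← root_factor hroot mu, ← hmu, sub_self, mul_zero]
    have hlam1 := H lam hroot
    have hmu1 := H mu hrootmu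
    have hprod : lam * mu = ((β * m : ℝ) : ℂ) := by
      rw [hmu]; linear_combination -hroot
    have h3 : β * |m| < 1 := by
      rw [← habsC, ← Real.norm_eq_abs, ← Complex.norm_real, ← hprod, norm_mul]
      nlinarith [norm_nonneg lam, norm_nonneg mu]
    have h1C : (1 - lam) * (1 - mu) = ((1 - m : ℝ) : ℂ) := by
      rw [hmu, root_factor hroot 1]; push_cast; ring
    have h2C : (-1 - lam) * (-1 - mu) = ((1 + (1 + 2 * β) * m : ℝ) : ℂ) := by
      rw [hmu, root_factor hroot (-1)]; push_cast; ring
    rcases eq_or_ne lam.im 0 with him | him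
    · -- both roots real
      have hlr : lam = ((lam.re : ℝ) : ℂ) := by
        apply Complex.ext <;> simp [him]
      set r := lam.re with hr
      have hsr : mu = (((1 + β) * m - r : ℝ) : ℂ) := by
        rw [hmu, hlr]; push_cast; ring
      set s := (1 + β) * m - r with hs
      have hrabs : |r| < 1 := by rwa [hlr, Complex.norm_real, Real.norm_eq_abs] at hlam1
      have hsabs : |s| < 1 := by rwa [hsr, Complex.norm_real, Real.norm_eq_abs] at hmu1
      have hrlt := abs_lt.mp hrabs
      have hslt := abs_lt.mp hsabs
      have e1 : (1 - r) * (1 - s) = 1 - m := by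
        have := h1C
        rw [hlr, hsr] at this
        exact_mod_cast (by push_cast at this ⊢; linear_combination this : ((1-r)*(1-s) : ℂ) = ((1 - m : ℝ) : ℂ))
      have e2 : (1 + r) * (1 + s) = 1 + (1 + 2 * β) * m := by
        have := h2C
        rw [hlr, hsr] at this
        exact_mod_cast (by push_cast at this ⊢; linear_combination this : ((1+r)*(1+s) : ℂ) = ((1 + (1+2*β)*m : ℝ) : ℂ))
      refine ⟨by nlinarith, by nlinarith, h3⟩
    · -- conjugate pair
      have hconj : mu = (starRingEnd ℂ) lam := by rw [hmu]; exact conj_root hroot him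
      have hn1 : lam ≠ 1 := by
        intro hh; rw [hh] at hlam1; simp at hlam1
      have hn2 : lam ≠ -1 := by
        intro hh; rw [hh] at hlam1; simp at hlam1
      have k1 : ((1 - m : ℝ) : ℂ) = ((Complex.normSq (1 - lam) : ℝ) : ℂ) := by
        rw [← h1C, hconj]
        rw [← Complex.mul_conj (1 - lam)]
        simp [map_sub]
      have k2 : ((1 + (1 + 2 * β) * m : ℝ) : ℂ) = ((Complex.normSq (-1 - lam) : ℝ) : ℂ) := by
        rw [← h2C, hconj]
        rw [← Complex.mul_conj (-1 - lam)]
        simp [map_sub]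
      have k1' : 1 - m = Complex.normSq (1 - lam) := Complex.ofReal_inj.mp k1
      have k2' : 1 + (1 + 2 * β) * m = Complex.normSq (-1 - lam) := Complex.ofReal_inj.mp k2
      refine ⟨?_, ?_, h3⟩
      · rw [k1']; exact Complex.normSq_pos.mpr (sub_ne_zero.mpr (Ne.symm hn1))
      · rw [k2']
        exact Complex.normSq_pos.mpr fun hh => hn2 (by linear_combination -hh)
  · rintro ⟨h1, h2, h3⟩ lam hroot
    set mu : ℂ := (((1 + β) * m : ℝ) : ℂ) - lam with hmu
    have hprod : lam * mu = ((β * m : ℝ) : ℂ) := by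
      rw [hmu]; linear_combination -hroot
    have h1C : (1 - lam) * (1 - mu) = ((1 - m : ℝ) : ℂ) := by
      rw [hmu, root_factor hroot 1]; push_cast; ring
    have h2C : (-1 - lam) * (-1 - mu) = ((1 + (1 + 2 * β) * m : ℝ) : ℂ) := by
      rw [hmu, root_factor hroot (-1)]; push_cast; ring
    rcases eq_or_ne lam.im 0 with him | him
    · have hlr : lam = ((lam.re : ℝ) : ℂ) := by
        apply Complex.ext <;> simp [him]
      set r := lam.re with hr
      have hsr : mu = (((1 + β) * m - r : ℝ) : ℂ) := by
        rw [hmu, hlr]; push_cast; ring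
      set s := (1 + β) * m - r with hs
      have eprod : r * s = β * m := by
        have := hprod
        rw [hlr, hsr] at this
        exact_mod_cast (by push_cast at this ⊢; linear_combination this : ((r*s : ℝ) : ℂ) = ((β * m : ℝ) : ℂ))
      have e1 : (1 - r) * (1 - s) = 1 - m := by
        have := h1C
        rw [hlr, hsr] at this
        exact_mod_cast (by push_cast at this ⊢; linear_combination this : ((1-r)*(1-s) : ℂ) = ((1 - m : ℝ) : ℂ))
      have e2 : (1 + r) * (1 + s) = 1 + (1 + 2 * β) * m := by
        have := h2C
        rw [hlr, hsr] at this
        exact_mod_cast (by push_cast at this ⊢; linear_combination this : ((1+r)*(1+s) : ℂ) = ((1 + (1+2*β)*m : ℝ) : ℂ))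
      have hrs : |r| * |s| < 1 := by
        rw [← abs_mul, eprod, habsC]; exact h3
      rw [hlr, Complex.norm_real, Real.norm_eq_abs]
      by_contra hcon
      push_neg at hcon
      have hsabs : |s| < 1 := by nlinarith [abs_nonneg s]
      have hslt := abs_lt.mp hsabs
      rcases le_abs.mp hcon with hcase | hcase
      · nlinarith
      · nlinarith
    · have hconj : mu = (starRingEnd ℂ) lam := by rw [hmu]; exact conj_root hroot him
      have hns : ((Complex.normSq lam : ℝ) : ℂ) = ((β * m : ℝ) : ℂ) := by
        rw [← Complex.mul_conj lam, ← hconj]; exact hprod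
      have hns' : Complex.normSq lam = β * m := Complex.ofReal_inj.mp hns
      have hlt : Complex.normSq lam < 1 := by
        rw [hns']
        calc β * m ≤ |β * m| := le_abs_self _
        _ = β * |m| := habsC
        _ < 1 := h3
      have hsq : ‖lam‖ ^ 2 < 1 := by rwa [Complex.sq_norm]
      nlinarith [norm_nonneg lam]
end

section
/- Let 0 < μ ≤ L, β ∈ [0,1), and α ∈ (0, 2(β+1)/(L(2β+1))). Then for every real number m ∈ [1 − αL, 1 − αμ], both complex roots of the quadratic λ² − (1+β) m λ + β m = 0 have modulus strictly less than 1. -/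
/-- For `0 < μ ≤ L`, `β ∈ [0,1)` and `α ∈ (0, 2(β+1)/(L(2β+1)))`,
every real `m ∈ [1 − αL, 1 − αμ]` is such that both complex roots of
`λ² − (1+β) m λ + β m = 0` have modulus strictly less than `1`. -/
theorem stmt_13 (μ L β α : ℝ) (hμ : 0 < μ) (hμL : μ ≤ L)
    (hβ0 : 0 ≤ β) (hβ1 : β < 1)
    (hα0 : 0 < α) (hα1 : α < 2 * (β + 1) / (L * (2 * β + 1))) :
    ∀ m ∈ Set.Icc (1 - α * L) (1 - α * μ),
      ∀ lam : ℂ,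
        lam ^ 2 - (((1 + β) * m : ℝ) : ℂ) * lam + ((β * m : ℝ) : ℂ) = 0 →
        ‖lam‖ < 1 := by
  intro m hm lam hroot
  obtain ⟨hml, hmu⟩ := hm
  have hL : 0 < L := lt_of_lt_of_le hμ hμL
  have hden : 0 < L * (2 * β + 1) := by positivity
  have key : α * (L * (2 * β + 1)) < 2 * (β + 1) := (lt_div_iff₀ hden).mp hα1
  have hm1 : m < 1 := by nlinarith
  have hm2 : -1 < m * (2 * β + 1) := by nlinarith
  -- real quantities
  have hc : β * m < 1 := by nlinarith [mul_nonneg hβ0 (sub_nonneg.mpr hm1.le)]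
  have hb1 : (1 + β) * m < 1 + β * m := by nlinarith
  have hb2 : -(1 + β * m) < (1 + β) * m := by nlinarith
  by_cases him : lam.im = 0
  · -- real root
    lift lam to ℝ using him with r
    have hr : r ^ 2 - (1 + β) * m * r + β * m = 0 := by exact_mod_cast hroot
    rw [Complex.norm_real, Real.norm_eq_abs, abs_lt]
    constructor
    · nlinarith [sq_nonneg (r + 1), sq_nonneg (r - 1), mul_self_nonneg (r + 1)]
    · nlinarith [sq_nonneg (r + 1), sq_nonneg (r - 1)]
  · -- complex root: conjugate is also a root
    have hconj : (starRingEnd ℂ) lam ^ 2 - (((1 + β) * m : ℝ) : ℂ) * (starRingEnd ℂ) lam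
        + ((β * m : ℝ) : ℂ) = 0 := by
      have := congrArg (starRingEnd ℂ) hroot
      simpa [map_sub, map_add, map_mul, map_pow, Complex.conj_ofReal] using this
    have hne : lam - (starRingEnd ℂ) lam ≠ 0 := by
      intro h
      exact him (Complex.conj_eq_iff_im.mp (sub_eq_zero.mp h).symm)
    have hsum : lam + (starRingEnd ℂ) lam = (((1 + β) * m : ℝ) : ℂ) := by
      have hdiff : (lam - (starRingEnd ℂ) lam) *
          (lam + (starRingEnd ℂ) lam - (((1 + β) * m : ℝ) : ℂ)) = 0 := by
        linear_combination hroot - hconj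
      rcases mul_eq_zero.mp hdiff with h | h
      · exact absurd h hne
      · linear_combination h
    have hprod : ((β * m : ℝ) : ℂ) = ((Complex.normSq lam : ℝ) : ℂ) := by
      have : ((β * m : ℝ) : ℂ) = (starRingEnd ℂ) lam * lam := by
        linear_combination hroot - lam * hsum
      rw [this, ← Complex.normSq_eq_conj_mul_self]
    have hprodR : β * m = Complex.normSq lam := Complex.ofReal_injective hprod
    have habs : ‖lam‖ ^ 2 = β * m := by
      rw [Complex.sq_norm, hprodR]
    nlinarith [norm_nonneg lam]
end

section
/- Let H be a symmetric positive definite d×d real matrix, γ > 0, and let A be the 2d×2d real block matrix [[0, I], [−H, −γI]]. Then a complex number λ is an eigenvalue of A if and only if λ² + γλ + h = 0 for some eigenvalue h of H. Consequently, every eigenvalue λ of A satisfies Re(λ) ≤ −(γ − √(max{0, γ² − 4μ}))/2, where μ > 0 is the smallest eigenvalue of H. -/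
open Matrix

/-- Eigenvector characterization of the spectrum of a complex matrix. -/
lemma my_mem_spec_iff {n : Type*} [Fintype n] [DecidableEq n] (M : Matrix n n ℂ) (l : ℂ) :
    l ∈ spectrum ℂ M ↔ ∃ v ≠ 0, M *ᵥ v = l • v := by
  rw [spectrum.mem_iff, Algebra.algebraMap_eq_smul_one, Matrix.isUnit_iff_isUnit_det,
    isUnit_iff_ne_zero, not_not, ← Matrix.exists_mulVec_eq_zero_iff]
  refine exists_congr fun v => and_congr_right fun _ => ?_
  rw [Matrix.sub_mulVec, Matrix.smul_mulVec, Matrix.one_mulVec, sub_eq_zero, eq_comm]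

/-- A real number is in the complex spectrum of the complexification iff it is in the real
spectrum. -/
lemma my_real_spec {d : ℕ} (H : Matrix (Fin d) (Fin d) ℝ) (r : ℝ) :
    (r : ℂ) ∈ spectrum ℂ (H.map (algebraMap ℝ ℂ)) ↔ r ∈ spectrum ℝ H := by
  have key : algebraMap ℂ (Matrix (Fin d) (Fin d) ℂ) (r : ℂ) - H.map (algebraMap ℝ ℂ)
      = (algebraMap ℝ (Matrix (Fin d) (Fin d) ℝ) r - H).map (algebraMap ℝ ℂ) := by
    ext i j
    simp [Matrix.algebraMap_matrix_apply, Matrix.map_apply, apply_ite (algebraMap ℝ ℂ)]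
    split <;> simp
  have hdet : ((algebraMap ℝ (Matrix (Fin d) (Fin d) ℝ) r - H).map (algebraMap ℝ ℂ)).det
      = ((algebraMap ℝ (Matrix (Fin d) (Fin d) ℝ) r - H).det : ℂ) := by
    rw [← RingHom.mapMatrix_apply, ← RingHom.map_det]; rfl
  rw [spectrum.mem_iff, spectrum.mem_iff, key, Matrix.isUnit_iff_isUnit_det,
    Matrix.isUnit_iff_isUnit_det, isUnit_iff_ne_zero, isUnit_iff_ne_zero, hdet]
  simp

/-- The complex spectrum of the complexification of a real symmetric matrix is the image of the
real spectrum. -/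
lemma my_spec_Hc {d : ℕ} (H : Matrix (Fin d) (Fin d) ℝ) (hH : H.IsHermitian) (c : ℂ) :
    c ∈ spectrum ℂ (H.map (algebraMap ℝ ℂ)) ↔ ∃ h ∈ spectrum ℝ H, (h : ℂ) = c := by
  have hHc : (H.map (algebraMap ℝ ℂ)).IsHermitian := by
    ext i j
    simp only [conjTranspose_apply, Matrix.map_apply]
    rw [← congrFun (congrFun hH j) i]
    simp [Complex.conj_ofReal]
  have hspec : spectrum ℂ (H.map (algebraMap ℝ ℂ))
      = Set.range (fun i => (hHc.eigenvalues i : ℂ)) := by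
    conv_lhs => rw [hHc.spectral_theorem, Unitary.conjStarAlgAut_apply, Unitary.spectrum_star_right_conjugate]
    rw [spectrum_diagonal]
    rfl
  rw [hspec]
  constructor
  · rintro ⟨i, rfl⟩
    exact ⟨hHc.eigenvalues i, (my_real_spec H _).1 (hspec ▸ ⟨i, rfl⟩), rfl⟩
  · rintro ⟨h, hh, rfl⟩
    exact hspec ▸ (my_real_spec H h).2 hh

/-- Block reduction: eigenvalues of the Heavy-Ball linearization correspond to the quadratic
eigenvalue problem for `H`. -/
lemma my_block {d : ℕ} (H : Matrix (Fin d) (Fin d) ℝ) (γ : ℝ) (l : ℂ) :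
    l ∈ spectrum ℂ ((Matrix.fromBlocks (0 : Matrix (Fin d) (Fin d) ℝ) (1 : Matrix (Fin d) (Fin d) ℝ)
              (-H) (-(γ • (1 : Matrix (Fin d) (Fin d) ℝ)))).map (algebraMap ℝ ℂ)) ↔
      (-(l ^ 2 + γ * l)) ∈ spectrum ℂ (H.map (algebraMap ℝ ℂ)) := by
  set Hc := H.map (algebraMap ℝ ℂ) with hHcdef
  have hAc : (Matrix.fromBlocks (0 : Matrix (Fin d) (Fin d) ℝ) 1 (-H)
        (-(γ • (1 : Matrix (Fin d) (Fin d) ℝ)))).map (algebraMap ℝ ℂ)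
      = Matrix.fromBlocks 0 1 (-Hc) (-((γ:ℂ) • (1 : Matrix (Fin d) (Fin d) ℂ))) := by
    ext (i|i) (j|j) <;>
      simp [Matrix.map_apply, Matrix.one_apply, apply_ite (algebraMap ℝ ℂ), hHcdef] <;>
      (try (split <;> simp))
  rw [hAc, my_mem_spec_iff, my_mem_spec_iff]
  constructor
  · rintro ⟨v, hv, heq⟩
    set x : Fin d → ℂ := fun i => v (Sum.inl i) with hx
    set y : Fin d → ℂ := fun i => v (Sum.inr i) with hy
    have hvelim : v = Sum.elim x y := by funext i; cases i <;> rfl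
    rw [hvelim, fromBlocks_mulVec] at heq
    have h1 : ∀ i, y i = l * x i := fun i => by
      have := congrFun heq (Sum.inl i); simpa using this
    have h2 : ∀ i, (Hc *ᵥ x) i = -(l ^ 2 + γ * l) * x i := fun i => by
      have h := congrFun heq (Sum.inr i)
      simp [Matrix.neg_mulVec, Matrix.smul_mulVec, Matrix.one_mulVec, h1 i] at h
      ring_nf
      ring_nf at h
      linear_combination -h
    refine ⟨x, ?_, funext fun i => by simpa using h2 i⟩
    intro hx0
    apply hv
    rw [hvelim]
    have : y = 0 := by funext i; rw [h1 i, show x i = 0 from congrFun hx0 i, mul_zero]; rfl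
    rw [hx0, this]; simp
  · rintro ⟨x, hx, heq⟩
    refine ⟨Sum.elim x (l • x), fun h0 => hx (funext fun i => congrFun h0 (Sum.inl i)), ?_⟩
    rw [fromBlocks_mulVec]
    funext i
    cases i with
    | inl i => simp
    | inr i =>
      have := congrFun heq i
      simp [Matrix.neg_mulVec, Matrix.smul_mulVec, Matrix.one_mulVec, this]
      ring

/-- The real-part bound for roots of the characteristic quadratic. -/
lemma my_bound (γ μ h : ℝ) (hμh : μ ≤ h) (l : ℂ)
    (heq : l ^ 2 + (γ : ℂ) * l + (h : ℂ) = 0) :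
    l.re ≤ -((γ - Real.sqrt (max 0 (γ ^ 2 - 4 * μ))) / 2) := by
  have h1 := congrArg Complex.re heq
  have h2 := congrArg Complex.im heq
  simp [pow_two, Complex.mul_re, Complex.mul_im] at h1 h2
  set a := l.re; set b := l.im
  set s := Real.sqrt (max 0 (γ ^ 2 - 4 * μ)) with hsdef
  have hs : 0 ≤ s := Real.sqrt_nonneg _
  have hs2 : s ^ 2 = max 0 (γ ^ 2 - 4 * μ) := Real.sq_sqrt (le_max_left _ _)
  have hs2' : γ ^ 2 - 4 * μ ≤ s ^ 2 := hs2 ▸ le_max_right _ _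
  have hb : b * (2 * a + γ) = 0 := by linarith [h2]
  rcases mul_eq_zero.1 hb with hb0 | hb0
  · rw [hb0] at h1
    nlinarith [sq_nonneg (2 * a + γ - s), sq_nonneg (2 * a + γ + s)]
  · nlinarith

/-- Let `H` be a symmetric positive definite `d×d` real matrix, `γ > 0`,
and `A = [[0, I], [−H, −γI]]`.  A complex number `λ` is an eigenvalue of `A` iff
`λ² + γλ + h = 0` for some eigenvalue `h` of `H`; consequently every eigenvalue `λ` of `A`
satisfies `Re λ ≤ −(γ − √(max 0 (γ² − 4μ)))/2`, where `μ > 0` is the smallest eigenvalue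
of `H`. -/
theorem stmt_16 {d : ℕ} (H : Matrix (Fin d) (Fin d) ℝ) (hH : H.PosDef)
    (γ : ℝ) (hγ : 0 < γ) (μ : ℝ) (hμ : IsLeast (spectrum ℝ H) μ) (hμpos : 0 < μ) :
    (∀ lam : ℂ,
      lam ∈ spectrum ℂ
          ((Matrix.fromBlocks (0 : Matrix (Fin d) (Fin d) ℝ) (1 : Matrix (Fin d) (Fin d) ℝ)
              (-H) (-(γ • (1 : Matrix (Fin d) (Fin d) ℝ)))).map (algebraMap ℝ ℂ)) ↔
        ∃ h ∈ spectrum ℝ H, lam ^ 2 + (γ : ℂ) * lam + (h : ℂ) = 0) ∧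
    (∀ lam : ℂ,
      lam ∈ spectrum ℂ
          ((Matrix.fromBlocks (0 : Matrix (Fin d) (Fin d) ℝ) (1 : Matrix (Fin d) (Fin d) ℝ)
              (-H) (-(γ • (1 : Matrix (Fin d) (Fin d) ℝ)))).map (algebraMap ℝ ℂ)) →
        lam.re ≤ -((γ - Real.sqrt (max 0 (γ ^ 2 - 4 * μ))) / 2)) := by
  have part1 : ∀ lam : ℂ,
      lam ∈ spectrum ℂ
          ((Matrix.fromBlocks (0 : Matrix (Fin d) (Fin d) ℝ) (1 : Matrix (Fin d) (Fin d) ℝ)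
              (-H) (-(γ • (1 : Matrix (Fin d) (Fin d) ℝ)))).map (algebraMap ℝ ℂ)) ↔
        ∃ h ∈ spectrum ℝ H, lam ^ 2 + (γ : ℂ) * lam + (h : ℂ) = 0 := by
    intro lam
    rw [my_block H γ lam, my_spec_Hc H hH.1 _]
    refine exists_congr fun h => and_congr_right fun _ => ?_
    constructor
    · intro he; linear_combination he
    · intro he; linear_combination he
  refine ⟨part1, fun lam hmem => ?_⟩
  obtain ⟨h, hh, heq⟩ := (part1 lam).1 hmem
  exact my_bound γ μ h (hμ.2 hh) lam heq
end
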